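/- Let $N(x) = \sum_{i=1}^m u_i \sigma(\langle w_i, x\rangle)$ be a two-layer ReLU network with $|u_i| = 1/\sqrt{m}$, let $x_0 \in \mathbb{R}^d$ with $N(x_0) > 0$, and let $z \in \mathbb{R}^d$ and $C > 0$ be such that: (i) $\langle w_i, z \rangle \geq C$ for all $i$ with $u_i < 0$, and (ii) $\langle w_i, z \rangle \leq 0$ for all $i$ with $u_i > 0$. Let $k_- = |\{i : u_i < 0, \langle w_i, x_0 \rangle \geq 0\}|$. Then $N(x_0 + z) \leq N(x_0) - \tfrac{k_- C}{\sqrt{m}}$. In particular, if $C > \tfrac{\sqrt{m} N(x_0)}{k_-}$, then $N(x_0 + z) < 0$, i.e., the perturbation $z$ flips the sign of the network output. -/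

import Mathlib

/-!
Compare the network with its perturbation neuron by neuron. ReLU is monotone, so a neuron with
positive output weight can only lose output when its pre-activation drops by `⟪wᵢ, z⟫ ≤ 0`, and a
neuron with negative output weight can only gain pre-activation; if it is active at `x₀`, its ReLU
output grows by at least `C`, which the weight `-1/√m` turns into a loss of `C/√m`.
-/

open Finset

lemma mul_max_add_le_of_nonneg {u a b : ℝ} (hu : 0 ≤ u) (hb : b ≤ 0) :
    u * max (a + b) 0 ≤ u * max a 0 := by
  gcongr
  linarith

lemma mul_max_add_le_of_nonpos {u a b : ℝ} (hu : u ≤ 0) (ha : a ≤ 0) :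
    u * max (a + b) 0 ≤ u * max a 0 := by
  rw [max_eq_right ha, mul_zero]
  exact mul_nonpos_of_nonpos_of_nonneg hu (le_max_right _ _)

lemma mul_max_add_le_add_mul {u a b C : ℝ} (hu : u ≤ 0) (ha : 0 ≤ a) (hb : C ≤ b) :
    u * max (a + b) 0 ≤ u * max a 0 + u * C := by
  rw [max_eq_left ha, ← mul_add]
  exact mul_le_mul_of_nonpos_left ((add_le_add_right hb a).trans (le_max_left _ _)) hu

section ReluNet

variable {ι E : Type*} [Fintype ι] [SeminormedAddCommGroup E] [InnerProductSpace ℝ E]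

def reluNet (u : ι → ℝ) (w : ι → E) (x : E) : ℝ :=
  ∑ i, u i * max (inner ℝ (w i) x) 0

noncomputable def activeNegativeNeurons (u : ι → ℝ) (w : ι → E) (x : E) : Finset ι :=
  univ.filter fun i => u i < 0 ∧ 0 ≤ inner ℝ (w i) x

theorem reluNet_add_le (u : ι → ℝ) (w : ι → E) (x₀ z : E) (C : ℝ)
    (hneg : ∀ i, u i < 0 → C ≤ inner ℝ (w i) z) (hpos : ∀ i, 0 < u i → inner ℝ (w i) z ≤ 0) :
    reluNet u w (x₀ + z) ≤
      reluNet u w x₀ + C * ∑ i ∈ activeNegativeNeurons u w x₀, u i := by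
  rw [activeNegativeNeurons, mul_sum, sum_filter, reluNet, reluNet, ← sum_add_distrib]
  refine sum_le_sum fun i _ => ?_
  rw [inner_add_right]
  rcases lt_trichotomy (u i) 0 with hu | hu | hu
  · by_cases ha : 0 ≤ inner ℝ (w i) x₀
    · rw [if_pos ⟨hu, ha⟩, mul_comm C]
      exact mul_max_add_le_add_mul hu.le ha (hneg i hu)
    · rw [if_neg fun h => ha h.2, add_zero]
      exact mul_max_add_le_of_nonpos hu.le (not_le.1 ha).le
  · simp [hu]
  · rw [if_neg fun h => h.1.not_gt hu, add_zero]
    exact mul_max_add_le_of_nonneg hu.le (hpos i hu)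

theorem reluNet_add_le_sub_card_mul {u : ι → ℝ} {c : ℝ} (hu : ∀ i, |u i| = c)
    (w : ι → E) (x₀ z : E) (C : ℝ)
    (hneg : ∀ i, u i < 0 → C ≤ inner ℝ (w i) z) (hpos : ∀ i, 0 < u i → inner ℝ (w i) z ≤ 0) :
    reluNet u w (x₀ + z) ≤ reluNet u w x₀ - #(activeNegativeNeurons u w x₀) * C * c := by
  have hsum : ∑ i ∈ activeNegativeNeurons u w x₀, u i = -(#(activeNegativeNeurons u w x₀) * c) := by
    have hneg_c : ∀ i ∈ activeNegativeNeurons u w x₀, u i = -c :=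
      fun i hi => by rw [← hu i, abs_of_neg (mem_filter.1 hi).2.1, neg_neg]
    rw [sum_congr rfl hneg_c, sum_const, nsmul_eq_mul, mul_neg]
  linear_combination reluNet_add_le u w x₀ z C hneg hpos + C * hsum

end ReluNet

theorem perturbation_flips_sign_general
    (d m : ℕ) (u : Fin m → ℝ) (hu : ∀ i, |u i| = 1 / Real.sqrt m)
    (w : Fin m → EuclideanSpace ℝ (Fin d)) (x₀ z : EuclideanSpace ℝ (Fin d))
    (C : ℝ)
    (hneg : ∀ i, u i < 0 → C ≤ (inner ℝ (w i) z : ℝ))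
    (hpos : ∀ i, 0 < u i → (inner ℝ (w i) z : ℝ) ≤ 0)
    (kneg : ℕ)
    (hk : kneg = (univ.filter (fun i => u i < 0 ∧ (0 : ℝ) ≤ (inner ℝ (w i) x₀ : ℝ))).card) :
    (∑ i, u i * max ((inner ℝ (w i) (x₀ + z) : ℝ)) 0 ≤
      (∑ i, u i * max ((inner ℝ (w i) x₀ : ℝ)) 0) - (kneg : ℝ) * C / Real.sqrt m) ∧
    (0 < kneg →
      Real.sqrt m * (∑ i, u i * max ((inner ℝ (w i) x₀ : ℝ)) 0) / kneg < C →
      ∑ i, u i * max ((inner ℝ (w i) (x₀ + z) : ℝ)) 0 < 0) := by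
  replace hk : kneg = #(activeNegativeNeurons u w x₀) := hk
  have hbound : reluNet u w (x₀ + z) ≤ reluNet u w x₀ - kneg * C / Real.sqrt m := by
    simpa only [← hk, mul_one_div] using reluNet_add_le_sub_card_mul hu w x₀ z C hneg hpos
  refine ⟨hbound, fun hk₀ hC => ?_⟩
  have hm : 0 < m := hk₀.trans_le (hk ▸ (card_le_univ _).trans_eq (Fintype.card_fin m))
  have hsqrt : 0 < Real.sqrt m := Real.sqrt_pos.2 (Nat.cast_pos.2 hm)
  rw [div_lt_iff₀ (Nat.cast_pos.2 hk₀)] at hC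
  have hN : reluNet u w x₀ < kneg * C / Real.sqrt m := by
    rw [lt_div_iff₀ hsqrt, reluNet]
    linarith
  exact hbound.trans_lt (sub_neg.2 hN)

/-- If a perturbation `z` satisfies `⟨wᵢ,z⟩ ≥ C` for all neurons with negative output
weight and `⟨wᵢ,z⟩ ≤ 0` for all neurons with positive output weight, then the output of
the two-layer ReLU network `N(x) = ∑ i, uᵢ σ(⟨wᵢ,x⟩)` (with `|uᵢ| = 1/√m`) satisfies
`N(x₀+z) ≤ N(x₀) - k₋ C/√m`, where `k₋` is the number of active negative neurons at `x₀`;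
in particular if `C > √m N(x₀)/k₋` then `N(x₀+z) < 0`. -/
theorem perturbation_flips_sign
    (d m : ℕ) (u : Fin m → ℝ) (hu : ∀ i, |u i| = 1 / Real.sqrt m)
    (w : Fin m → EuclideanSpace ℝ (Fin d)) (x₀ z : EuclideanSpace ℝ (Fin d))
    (C : ℝ) (hC : 0 < C)
    (hN : 0 < ∑ i, u i * max ((inner ℝ (w i) x₀ : ℝ)) 0)
    (hneg : ∀ i, u i < 0 → C ≤ (inner ℝ (w i) z : ℝ))
    (hpos : ∀ i, 0 < u i → (inner ℝ (w i) z : ℝ) ≤ 0)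
    (kneg : ℕ)
    (hk : kneg = (univ.filter (fun i => u i < 0 ∧ (0 : ℝ) ≤ (inner ℝ (w i) x₀ : ℝ))).card) :
    (∑ i, u i * max ((inner ℝ (w i) (x₀ + z) : ℝ)) 0 ≤
      (∑ i, u i * max ((inner ℝ (w i) x₀ : ℝ)) 0) - (kneg : ℝ) * C / Real.sqrt m) ∧
    (0 < kneg →
      Real.sqrt m * (∑ i, u i * max ((inner ℝ (w i) x₀ : ℝ)) 0) / kneg < C →
      ∑ i, u i * max ((inner ℝ (w i) (x₀ + z) : ℝ)) 0 < 0) :=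
  perturbation_flips_sign_general d m u hu w x₀ z C hneg hpos kneg hk
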